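/- arXiv:2009.04711 — 7 statements merged into one kernel-verified Lean document; each statement's English description precedes it below -/
import Mathlib

section
/- Let G be a transitive permutation group on a set X, and let Z1, Z2 be Jordan sets for (G,X) (i.e. for i=1,2, the pointwise stabiliser of X∖Zi acts transitively on Zi and |Zi|>1) forming a typical pair: Z1 ⊄ Z2, Z2 ⊄ Z1, and Z1 ∩ Z2 ≠ ∅. Then Z1 ∪ Z2 is a Jordan set for (G,X). -/
/-
Inside `Z₁ ∪ Z₂` every point can be moved to a chosen point `z ∈ Z₁ ∩ Z₂` by an element of `G`
fixing `X \ (Z₁ ∪ Z₂)` pointwise: points of `Zᵢ` are moved within `Zᵢ`, using the Jordan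
property of `Zᵢ`. Composing one such element with the inverse of another connects any two points.
-/

/-- `Z` is a Jordan set for the permutation group `G` on `X`: `|Z| > 1` and the
pointwise stabiliser of `X \ Z` acts transitively on `Z`. -/
def IsJordanSet {X : Type*} (G : Subgroup (Equiv.Perm X)) (Z : Set X) : Prop :=
  Z.Nontrivial ∧ ∀ x ∈ Z, ∀ y ∈ Z, ∃ g ∈ G, (∀ a ∉ Z, g a = a) ∧ g x = y

namespace IsJordanSet

variable {X : Type*} {G : Subgroup (Equiv.Perm X)}

theorem exists_fixing_compl_of_subset {Z W : Set X} (hZ : IsJordanSet G Z) (hZW : Z ⊆ W)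
    {x y : X} (hx : x ∈ Z) (hy : y ∈ Z) :
    ∃ g ∈ G, (∀ a ∉ W, g a = a) ∧ g x = y := by
  obtain ⟨g, hgG, hfix, hgx⟩ := hZ.2 x hx y hy
  exact ⟨g, hgG, fun a ha => hfix a (fun haZ => ha (hZW haZ)), hgx⟩

theorem of_forall_exists_apply_eq {Z : Set X} (hZ : Z.Nontrivial) (z : X)
    (hto : ∀ x ∈ Z, ∃ g ∈ G, (∀ a ∉ Z, g a = a) ∧ g x = z) : IsJordanSet G Z := by
  refine ⟨hZ, fun x hx y hy => ?_⟩
  obtain ⟨g, hgG, hgfix, hgx⟩ := hto x hx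
  obtain ⟨h, hhG, hhfix, hhy⟩ := hto y hy
  refine ⟨h⁻¹ * g, mul_mem (inv_mem hhG) hgG, fun a ha => ?_, ?_⟩
  · rw [Equiv.Perm.mul_apply, hgfix a ha, Equiv.Perm.inv_eq_iff_eq, hhfix a ha]
  · rw [Equiv.Perm.mul_apply, hgx, Equiv.Perm.inv_eq_iff_eq, hhy]

end IsJordanSet

theorem stmt0_general {X : Type*} (G : Subgroup (Equiv.Perm X))
    (Z1 Z2 : Set X) (h1 : IsJordanSet G Z1) (h2 : IsJordanSet G Z2)
    (hint : (Z1 ∩ Z2).Nonempty) :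
    IsJordanSet G (Z1 ∪ Z2) := by
  obtain ⟨z, hz1, hz2⟩ := hint
  refine .of_forall_exists_apply_eq (h1.1.mono Set.subset_union_left) z ?_
  rintro x (hx | hx)
  · exact h1.exists_fixing_compl_of_subset Set.subset_union_left hx hz1
  · exact h2.exists_fixing_compl_of_subset Set.subset_union_right hx hz2

theorem stmt0 {X : Type*} (G : Subgroup (Equiv.Perm X))
    (htrans : ∀ x y : X, ∃ g ∈ G, g x = y)
    (Z1 Z2 : Set X) (h1 : IsJordanSet G Z1) (h2 : IsJordanSet G Z2)
    (hn1 : ¬ Z1 ⊆ Z2) (hn2 : ¬ Z2 ⊆ Z1) (hint : (Z1 ∩ Z2).Nonempty) :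
    IsJordanSet G (Z1 ∪ Z2) :=
  stmt0_general G Z1 Z2 h1 h2 hint
end

section
/- Let G be a transitive permutation group on a set X and let {Z_i : i ∈ I} be a connected family of Jordan sets for (G,X), meaning that for any i, i' ∈ I there exist j_0, ..., j_l ∈ I with j_0 = i, j_l = i', and Z_{j_{r-1}} ∩ Z_{j_r} ≠ ∅ for all 1 ≤ r ≤ l. Then ⋃_{i∈I} Z_i is a Jordan set for (G,X). -/
/-! Points of a Jordan set `Z ⊆ U` can be moved into each other by elements of `G` fixing
`X \ U` pointwise, and such moves compose. Following a chain of intersecting `Z_i` through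
common points therefore moves any point of the union to any other. -/

def MovableWithin {X : Type*} (G : Subgroup (Equiv.Perm X)) (U : Set X) (x y : X) : Prop :=
  ∃ g ∈ G, (∀ a ∉ U, g a = a) ∧ g x = y

namespace MovableWithin

variable {X : Type*} {G : Subgroup (Equiv.Perm X)} {U V : Set X}

theorem trans {x y z : X} : MovableWithin G U x y → MovableWithin G U y z →
    MovableWithin G U x z := by
  rintro ⟨g, hg, hgU, rfl⟩ ⟨h, hh, hhU, rfl⟩
  exact ⟨h * g, mul_mem hh hg, fun a ha => by simp [hgU a ha, hhU a ha], rfl⟩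

theorem mono (hUV : U ⊆ V) {x y : X} : MovableWithin G U x y → MovableWithin G V x y := by
  rintro ⟨g, hg, hgU, hxy⟩
  exact ⟨g, hg, fun a ha => hgU a (fun haU => ha (hUV haU)), hxy⟩

instance : IsTrans X (MovableWithin G U) :=
  ⟨fun _ _ _ => trans⟩

end MovableWithin

theorem rel_of_mem_chain {α I : Type*} {r : α → α → Prop} [IsTrans α r] {Z : I → Set α}
    (hZ : ∀ i, ∀ x ∈ Z i, ∀ y ∈ Z i, r x y) {l : ℕ} {j : Fin (l + 1) → I}
    (hj : ∀ k : Fin l, (Z (j k.castSucc) ∩ Z (j k.succ)).Nonempty)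
    {x y : α} (hx : x ∈ Z (j 0)) (hy : y ∈ Z (j (Fin.last l))) : r x y := by
  induction l generalizing x with
  | zero => exact hZ _ x hx y hy
  | succ l ih =>
    obtain ⟨w, hw₀, hw₁⟩ := hj 0
    refine _root_.trans (hZ _ x hx w hw₀) (ih (j := fun k => j k.succ) (fun k => ?_) hw₁ hy)
    simpa only [Fin.succ_castSucc] using hj k.succ

theorem stmt1_general {X I : Type*} [Nonempty I] (G : Subgroup (Equiv.Perm X))
    (Z : I → Set X) (hJ : ∀ i, IsJordanSet G (Z i))
    (hconn : ∀ i i' : I, ∃ (l : ℕ) (j : Fin (l + 1) → I), j 0 = i ∧ j (Fin.last l) = i' ∧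
      ∀ r : Fin l, (Z (j r.castSucc) ∩ Z (j r.succ)).Nonempty) :
    IsJordanSet G (⋃ i, Z i) := by
  obtain ⟨i₀⟩ := ‹Nonempty I›
  refine ⟨(hJ i₀).1.mono (Set.subset_iUnion Z i₀), fun x hx y hy => ?_⟩
  obtain ⟨i, hxi⟩ := Set.mem_iUnion.1 hx
  obtain ⟨i', hyi⟩ := Set.mem_iUnion.1 hy
  obtain ⟨l, j, rfl, rfl, hj⟩ := hconn i i'
  have hZ : ∀ i, ∀ x ∈ Z i, ∀ y ∈ Z i, MovableWithin G (⋃ i, Z i) x y := fun i x hx y hy =>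
    MovableWithin.mono (Set.subset_iUnion Z i) ((hJ i).2 x hx y hy)
  exact rel_of_mem_chain hZ hj hxi hyi

theorem stmt1 {X I : Type*} [Nonempty I] (G : Subgroup (Equiv.Perm X))
    (htrans : ∀ x y : X, ∃ g ∈ G, g x = y)
    (Z : I → Set X) (hJ : ∀ i, IsJordanSet G (Z i))
    (hconn : ∀ i i' : I, ∃ (l : ℕ) (j : Fin (l + 1) → I), j 0 = i ∧ j (Fin.last l) = i' ∧
      ∀ r : Fin l, (Z (j r.castSucc) ∩ Z (j r.succ)).Nonempty) :
    IsJordanSet G (⋃ i, Z i) :=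
  stmt1_general G Z hJ hconn
end

section
/- Let T be a finite tree without vertices of degree 2, and let X be the set of leaves of T. Define D(x,y;z,w) to hold if (x = y ∧ x ∉ {z,w}) or (z = w ∧ z ∉ {x,y}) or (x,y,z,w are distinct and the path in T from x to y is vertex-disjoint from the path from z to w). Then D satisfies the D-relation axioms (D1)–(D4): (D1) D(x,y;z,w) implies D(y,x;z,w), D(x,y;w,z), and D(z,w;x,y); (D2) D(x,y;z,w) implies ¬D(x,z;y,w); (D3) D(x,y;z,w) implies for all a, D(a,y;z,w) ∨ D(x,y;z,a); (D4) if x ≠ z and y ≠ z then D(x,y;z,z). -/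
/-!
In an acyclic graph paths are unique, so the path between two vertices of a walk stays inside
that walk. For (D2): if the path from `x` to `z` missed the path from `y` to `w`, it would run
inside `[x, y] ∪ [z, w]` and hence cross from `[x, y]` to `[z, w]` along an edge `uu'`; this edge
is a bridge, so it lies on the walk `u → y → w → u'`, and therefore on the path from `y` to `w`.
For (D3): if `n` lies on the path `z → a` and `m` on the path `a → y`, then `n` lies on the path
`z → m` or `m` on the path `n → y`; with `n ∈ [x, y]` and `m ∈ [z, w]`, either alternative puts a
vertex in both `[x, y]` and `[z, w]`.
-/

/-- The `D`-relation on vertices of a tree: `D x y z w` holds if `x = y` lies outside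
`{z,w}`, or `z = w` lies outside `{x,y}`, or all four are distinct and the path from
`x` to `y` is vertex-disjoint from the path from `z` to `w`. -/
def TreeD {V : Type*} (G : SimpleGraph V) (x y z w : V) : Prop :=
  (x = y ∧ x ≠ z ∧ x ≠ w) ∨ (z = w ∧ z ≠ x ∧ z ≠ y) ∨
  (x ≠ y ∧ x ≠ z ∧ x ≠ w ∧ y ≠ z ∧ y ≠ w ∧ z ≠ w ∧
    ∀ (p : G.Walk x y) (q : G.Walk z w), p.IsPath → q.IsPath →
      ∀ v, v ∈ p.support → v ∉ q.support)

namespace SimpleGraph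

variable {V : Type*} {G : SimpleGraph V}

/-- The last conjunct of `TreeD G x y z w` is `G.PathsDisjoint x y z w`, unfolded. -/
def PathsDisjoint (G : SimpleGraph V) (x y z w : V) : Prop :=
  ∀ (p : G.Walk x y) (q : G.Walk z w), p.IsPath → q.IsPath →
    ∀ v, v ∈ p.support → v ∉ q.support

namespace IsAcyclic

theorem eq_of_isPath (hG : G.IsAcyclic) {u v : V} {p q : G.Walk u v} (hp : p.IsPath)
    (hq : q.IsPath) : p = q :=
  congrArg Subtype.val ((hG.subsingleton_path u v).elim ⟨p, hp⟩ ⟨q, hq⟩)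

theorem support_subset_of_isPath (hG : G.IsAcyclic) {u v : V} {p : G.Walk u v} (hp : p.IsPath)
    (q : G.Walk u v) : p.support ⊆ q.support := by
  classical
  rw [hG.eq_of_isPath hp q.bypass_isPath]
  exact q.support_bypass_subset_support

theorem support_subset_of_mem_support (hG : G.IsAcyclic) {a b u v : V} (p : G.Walk a b)
    {q : G.Walk u v} (hq : q.IsPath) (hu : u ∈ p.support) (hv : v ∈ p.support) :
    q.support ⊆ p.support := by
  classical
  intro x hx
  have hx := hG.support_subset_of_isPath hq ((p.takeUntil u hu).reverse.append
    (p.takeUntil v hv)) hx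
  rw [Walk.mem_support_append_iff, Walk.support_reverse, List.mem_reverse] at hx
  exact hx.elim (p.support_takeUntil_subset_support hu ·) (p.support_takeUntil_subset_support hv ·)

theorem mem_support_of_mem_support_takeUntil [DecidableEq V] (hG : G.IsAcyclic)
    {a y m n : V} {s : G.Walk a y} (hs : s.IsPath) (hm : m ∈ s.support)
    (hn : n ∈ (s.takeUntil m hm).support)
    {u : G.Walk n y} (hu : u.IsPath) : m ∈ u.support := by
  set t := s.takeUntil m hm
  have hsplit : s = (t.takeUntil n hn).append ((t.dropUntil n hn).append (s.dropUntil m hm)) := by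
    rw [Walk.append_assoc, Walk.take_spec, Walk.take_spec]
  rw [hG.eq_of_isPath hu (hsplit ▸ hs).of_append_right, Walk.mem_support_append_iff]
  exact Or.inl (t.dropUntil n hn).end_mem_support

theorem mem_support_or_mem_support (hG : G.IsAcyclic) {z a y m n : V} {r : G.Walk z a}
    {s : G.Walk a y} {t : G.Walk z m} {u : G.Walk n y} (hr : r.IsPath) (hs : s.IsPath)
    (hu : u.IsPath) (hn : n ∈ r.support) (hm : m ∈ s.support) : n ∈ t.support ∨ m ∈ u.support := by
  classical
  -- If `n` is not on `[z, m]`, it lies on `[m, a] ⊆ [a, y]`, i.e. before `m` on `s`.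
  refine or_iff_not_imp_left.2 fun hnt => ?_
  have hn' := hG.support_subset_of_isPath hr (t.append (s.takeUntil m hm).reverse) hn
  rw [Walk.mem_support_append_iff, Walk.support_reverse, List.mem_reverse] at hn'
  exact hG.mem_support_of_mem_support_takeUntil hs hm (hn'.resolve_left hnt) hu

theorem exists_mem_support_of_disjoint (hG : G.IsAcyclic) {x y z w : V} {P : G.Walk x y}
    {Q : G.Walk z w} (hPQ : ∀ v ∈ P.support, v ∉ Q.support) {r : G.Walk x z} (hr : r.IsPath)
    (s : G.Walk y w) : ∃ v ∈ r.support, v ∈ s.support := by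
  classical
  by_contra! hrs
  have hr_sub : ∀ v ∈ r.support, v ∈ P.support ∨ v ∈ Q.support := by
    intro v hv
    have := hG.support_subset_of_isPath hr (P.append (s.append Q.reverse)) hv
    simp only [Walk.mem_support_append_iff, Walk.support_reverse, List.mem_reverse] at this
    exact this.imp_right (·.resolve_left (hrs v hv))
  obtain ⟨d, hd, hdP, hdP'⟩ :=
    r.exists_boundary_dart {v | v ∈ P.support} P.start_mem_support (hPQ z · Q.start_mem_support)
  have hdr := r.dart_fst_mem_support_of_mem_darts hd
  have hdQ : d.snd ∈ Q.support :=
    (hr_sub _ (r.dart_snd_mem_support_of_mem_darts hd)).resolve_left hdP'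
  have hbridge := isBridge_iff_forall_walk_mem_edges.1
    (isAcyclic_iff_forall_adj_isBridge.1 hG d.adj)
    ((P.dropUntil _ hdP).append (s.append (Q.dropUntil _ hdQ).reverse))
  simp only [Walk.edges_append, Walk.edges_reverse, List.mem_append, List.mem_reverse] at hbridge
  rcases hbridge with h | h | h
  · exact hdP' (P.support_dropUntil_subset_support _
      ((P.dropUntil _ hdP).snd_mem_support_of_mem_edges h))
  · exact hrs _ hdr (s.fst_mem_support_of_mem_edges h)
  · exact hPQ _ hdP (Q.support_dropUntil_subset_support _
      ((Q.dropUntil _ hdQ).fst_mem_support_of_mem_edges h))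

end IsAcyclic

namespace PathsDisjoint

variable {x y z w : V}

theorem swap_left (h : G.PathsDisjoint x y z w) : G.PathsDisjoint y x z w :=
  fun p q hp hq v hv => h p.reverse q hp.reverse hq v (by simpa using hv)

theorem swap_right (h : G.PathsDisjoint x y z w) : G.PathsDisjoint x y w z :=
  fun p q hp hq v hv hvq => h p q.reverse hp hq.reverse v hv (by simpa using hvq)

theorem symm (h : G.PathsDisjoint x y z w) : G.PathsDisjoint z w x y :=
  fun p q hp hq v hv hvq => h q p hq hp v hvq hv

theorem not_pathsDisjoint_swap (hT : G.IsTree) (h : G.PathsDisjoint x y z w) :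
    ¬ G.PathsDisjoint x z y w := by
  obtain ⟨P, hP⟩ := hT.connected.exists_isPath x y
  obtain ⟨Q, hQ⟩ := hT.connected.exists_isPath z w
  obtain ⟨r, hr⟩ := hT.connected.exists_isPath x z
  obtain ⟨s, hs⟩ := hT.connected.exists_isPath y w
  obtain ⟨v, hvr, hvs⟩ := hT.isAcyclic.exists_mem_support_of_disjoint (h P Q hP hQ) hr s
  exact fun h' => h' r s hr hs v hvr hvs

theorem left_or_right (hT : G.IsTree) (h : G.PathsDisjoint x y z w) (a : V) :
    G.PathsDisjoint a y z w ∨ G.PathsDisjoint x y z a := by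
  refine or_iff_not_imp_left.2 fun hay P r hP hr n hnP hnr =>
    hay fun s Q hs hQ m hms hmQ => ?_
  obtain ⟨t, ht⟩ := hT.connected.exists_isPath z m
  obtain ⟨u, hu⟩ := hT.connected.exists_isPath n y
  have hPQ := h P Q hP hQ
  rcases hT.isAcyclic.mem_support_or_mem_support (t := t) hr hs hu hnr hms with hnt | hmu
  · exact hPQ n hnP (hT.isAcyclic.support_subset_of_mem_support Q ht Q.start_mem_support hmQ hnt)
  · exact hPQ m (hT.isAcyclic.support_subset_of_mem_support P hu hnP P.end_mem_support hmu) hmQ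

end PathsDisjoint

end SimpleGraph

namespace TreeD

open SimpleGraph

variable {V : Type*} {G : SimpleGraph V} {x y z w : V}

theorem swap_left (h : TreeD G x y z w) : TreeD G y x z w := by
  rcases h with ⟨rfl, hz, hw⟩ | ⟨rfl, hx, hy⟩ | ⟨hxy, hxz, hxw, hyz, hyw, hzw, hd⟩
  · exact Or.inl ⟨rfl, hz, hw⟩
  · exact Or.inr (Or.inl ⟨rfl, hy, hx⟩)
  · exact Or.inr (Or.inr ⟨hxy.symm, hyz, hyw, hxz, hxw, hzw, PathsDisjoint.swap_left hd⟩)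

theorem swap_right (h : TreeD G x y z w) : TreeD G x y w z := by
  rcases h with ⟨rfl, hz, hw⟩ | ⟨rfl, hx, hy⟩ | ⟨hxy, hxz, hxw, hyz, hyw, hzw, hd⟩
  · exact Or.inl ⟨rfl, hw, hz⟩
  · exact Or.inr (Or.inl ⟨rfl, hx, hy⟩)
  · exact Or.inr (Or.inr ⟨hxy, hxw, hxz, hyw, hyz, hzw.symm, PathsDisjoint.swap_right hd⟩)

theorem symm (h : TreeD G x y z w) : TreeD G z w x y := by
  rcases h with ⟨rfl, hz, hw⟩ | ⟨rfl, hx, hy⟩ | ⟨hxy, hxz, hxw, hyz, hyw, hzw, hd⟩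
  · exact Or.inr (Or.inl ⟨rfl, hz, hw⟩)
  · exact Or.inl ⟨rfl, hx, hy⟩
  · exact Or.inr (Or.inr ⟨hzw, hxz.symm, hyz.symm, hxw.symm, hyw.symm, hxy,
      PathsDisjoint.symm hd⟩)

theorem not_treeD_swap (hT : G.IsTree) (h : TreeD G x y z w) : ¬ TreeD G x z y w := by
  rcases h with ⟨rfl, hz, hw⟩ | ⟨rfl, hx, hy⟩ | ⟨hxy, hxz, hxw, hyz, hyw, hzw, hd⟩ <;>
    rintro (⟨h1, -, -⟩ | ⟨h1, -, -⟩ | ⟨h1, h2, h3, h4, h5, h6, hd'⟩)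
  all_goals first
    | exact PathsDisjoint.not_pathsDisjoint_swap hT hd hd'
    | tauto

theorem left_or_right (hT : G.IsTree) (h : TreeD G x y z w) (a : V) :
    TreeD G a y z w ∨ TreeD G x y z a := by
  rcases h with ⟨rfl, hz, hw⟩ | ⟨rfl, hx, hy⟩ | ⟨hxy, hxz, hxw, hyz, hyw, hzw, hd⟩
  · obtain rfl | hax := eq_or_ne a x
    · exact Or.inl (Or.inl ⟨rfl, hz, hw⟩)
    · exact Or.inr (Or.inl ⟨rfl, hz, hax.symm⟩)
  · obtain rfl | hza := eq_or_ne z a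
    · exact Or.inr (Or.inr (Or.inl ⟨rfl, hx, hy⟩))
    · exact Or.inl (Or.inr (Or.inl ⟨rfl, hza, hy⟩))
  · obtain rfl | hax := eq_or_ne a x
    · exact Or.inl (Or.inr (Or.inr ⟨hxy, hxz, hxw, hyz, hyw, hzw, hd⟩))
    obtain rfl | hay := eq_or_ne a y
    · exact Or.inl (Or.inl ⟨rfl, hyz, hyw⟩)
    obtain rfl | haz := eq_or_ne a z
    · exact Or.inr (Or.inr (Or.inl ⟨rfl, hxz.symm, hyz.symm⟩))
    obtain rfl | haw := eq_or_ne a w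
    · exact Or.inr (Or.inr (Or.inr ⟨hxy, hxz, hxw, hyz, hyw, hzw, hd⟩))
    exact (PathsDisjoint.left_or_right hT hd a).imp
      (fun hd' => Or.inr (Or.inr ⟨hay, haz, haw, hyz, hyw, hzw, hd'⟩))
      (fun hd' => Or.inr (Or.inr ⟨hxy, hxz, hax.symm, hyz, hay.symm, haz.symm, hd'⟩))

end TreeD

theorem stmt5_general {V : Type*} (G : SimpleGraph V) (hT : G.IsTree) (X : Set V) :
    (∀ x ∈ X, ∀ y ∈ X, ∀ z ∈ X, ∀ w ∈ X, TreeD G x y z w →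
      TreeD G y x z w ∧ TreeD G x y w z ∧ TreeD G z w x y) ∧
    (∀ x ∈ X, ∀ y ∈ X, ∀ z ∈ X, ∀ w ∈ X, TreeD G x y z w → ¬ TreeD G x z y w) ∧
    (∀ x ∈ X, ∀ y ∈ X, ∀ z ∈ X, ∀ w ∈ X, TreeD G x y z w →
      ∀ a ∈ X, TreeD G a y z w ∨ TreeD G x y z a) ∧
    (∀ x ∈ X, ∀ y ∈ X, ∀ z ∈ X, x ≠ z → y ≠ z → TreeD G x y z z) :=
  ⟨fun _ _ _ _ _ _ _ _ h => ⟨h.swap_left, h.swap_right, h.symm⟩,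
    fun _ _ _ _ _ _ _ _ h => h.not_treeD_swap hT,
    fun _ _ _ _ _ _ _ _ h a _ => h.left_or_right hT a,
    fun _ _ _ _ _ _ hxz hyz => Or.inr (Or.inl ⟨rfl, hxz.symm, hyz.symm⟩)⟩

theorem stmt5 {V : Type*} [Fintype V] [DecidableEq V] (G : SimpleGraph V)
    [DecidableRel G.Adj] (hT : G.IsTree) (hdeg : ∀ v, G.degree v ≠ 2)
    (X : Set V) (hX : X = {v | G.degree v = 1}) :
    (∀ x ∈ X, ∀ y ∈ X, ∀ z ∈ X, ∀ w ∈ X, TreeD G x y z w →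
      TreeD G y x z w ∧ TreeD G x y w z ∧ TreeD G z w x y) ∧
    (∀ x ∈ X, ∀ y ∈ X, ∀ z ∈ X, ∀ w ∈ X, TreeD G x y z w → ¬ TreeD G x z y w) ∧
    (∀ x ∈ X, ∀ y ∈ X, ∀ z ∈ X, ∀ w ∈ X, TreeD G x y z w →
      ∀ a ∈ X, TreeD G a y z w ∨ TreeD G x y z a) ∧
    (∀ x ∈ X, ∀ y ∈ X, ∀ z ∈ X, x ≠ z → y ≠ z → TreeD G x y z z) :=
  stmt5_general G hT X
end

section
/- Let (X,C) be a C-relation (a ternary relation satisfying the C-relation axioms). Define D(x,y;z,w) ⟺ (C(x;z,w) ∧ C(y;z,w)) ∨ (C(z;x,y) ∧ C(w;x,y)). Then D satisfies axioms (D1) and (D2) of a D-relation: D(x,y;z,w) implies D(y,x;z,w) ∧ D(x,y;w,z) ∧ D(z,w;x,y), and D(x,y;z,w) implies ¬D(x,z;y,w). -/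
namespace CRelation

variable {X : Type*} (C : X → X → X → Prop)

/-- `D C x y z w` is `D(x,y;z,w)`, with `C x y z` read as `C(x;y,z)`. -/
def D (x y z w : X) : Prop :=
  (C x z w ∧ C y z w) ∨ (C z x y ∧ C w x y)

variable {C}

theorem D_comm {x y z w : X} : D C x y z w ↔ D C z w x y := or_comm

section

variable (hC1 : ∀ x y z, C x y z → C x z y)
include hC1

theorem D_swap_left {x y z w : X} (h : D C x y z w) : D C y x z w := by
  rcases h with ⟨hx, hy⟩ | ⟨hz, hw⟩
  · exact Or.inl ⟨hy, hx⟩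
  · exact Or.inr ⟨hC1 _ _ _ hz, hC1 _ _ _ hw⟩

theorem D_swap_right {x y z w : X} (h : D C x y z w) : D C x y w z :=
  D_comm.2 (D_swap_left hC1 (D_comm.1 h))

theorem not_D_of_D (hC2 : ∀ x y z, C x y z → ¬ C y x z) {x y z w : X}
    (h : D C x y z w) : ¬ D C x z y w := by
  rcases h with ⟨hxzw, hyzw⟩ | ⟨hzxy, hwxy⟩ <;> rintro (⟨hxyw, hzyw⟩ | ⟨hyxz, hwxz⟩)
  · exact hC2 _ _ _ hzyw hyzw
  · exact hC2 _ _ _ (hC1 _ _ _ hxzw) hwxz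
  · exact hC2 _ _ _ (hC1 _ _ _ hxyw) hwxy
  · exact hC2 _ _ _ (hC1 _ _ _ hyxz) (hC1 _ _ _ hzxy)

end

end CRelation

theorem stmt6_general {X : Type*} (C : X → X → X → Prop)
    (hC1 : ∀ x y z, C x y z → C x z y)
    (hC2 : ∀ x y z, C x y z → ¬ C y x z) :
    (∀ x y z w : X, ((C x z w ∧ C y z w) ∨ (C z x y ∧ C w x y)) →
      (((C y z w ∧ C x z w) ∨ (C z y x ∧ C w y x)) ∧
       ((C x w z ∧ C y w z) ∨ (C w x y ∧ C z x y)) ∧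
       ((C z x y ∧ C w x y) ∨ (C x z w ∧ C y z w)))) ∧
    (∀ x y z w : X, ((C x z w ∧ C y z w) ∨ (C z x y ∧ C w x y)) →
      ¬ ((C x y w ∧ C z y w) ∨ (C y x z ∧ C w x z))) :=
  ⟨fun _ _ _ _ h => ⟨CRelation.D_swap_left hC1 h, CRelation.D_swap_right hC1 h,
      CRelation.D_comm.1 h⟩,
    fun _ _ _ _ h => CRelation.not_D_of_D hC1 hC2 h⟩

theorem stmt6 {X : Type*} (C : X → X → X → Prop)
    (hC1 : ∀ x y z, C x y z → C x z y)
    (hC2 : ∀ x y z, C x y z → ¬ C y x z)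
    (hC3 : ∀ x y z, C x y z → ∀ w, C x w z ∨ C w y z)
    (hC4 : ∀ x y : X, x ≠ y → C x y y) :
    (∀ x y z w : X, ((C x z w ∧ C y z w) ∨ (C z x y ∧ C w x y)) →
      (((C y z w ∧ C x z w) ∨ (C z y x ∧ C w y x)) ∧
       ((C x w z ∧ C y w z) ∨ (C w x y ∧ C z x y)) ∧
       ((C z x y ∧ C w x y) ∨ (C x z w ∧ C y z w)))) ∧
    (∀ x y z w : X, ((C x z w ∧ C y z w) ∨ (C z x y ∧ C w x y)) →
      ¬ ((C x y w ∧ C z y w) ∨ (C y x z ∧ C w x z))) :=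
  stmt6_general C hC1 hC2
end

section
/- Let G be a permutation group on a set X containing an element g that fixes three distinct points x, y, z and swaps two further distinct points u, v (all five points distinct). Then G does not preserve any separation relation on X, where a separation relation is the 4-ary relation induced by a circular order indicating that pairs separate each other; in particular, no circular order on X invariant under G can exist with this cycle structure. -/
/-- The separation relation induced by a circular order: `SepRel c a b d e` holds iff
`d` and `e` lie in distinct arcs determined by `a` and `b`. -/
def SepRel {X : Type*} (c : CircularOrder X) (a b d e : X) : Prop :=
  letI := c
  (sbtw a d b ∧ sbtw b e a) ∨ (sbtw a e b ∧ sbtw b d a)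

/-!
Fix a base point `a`; then `sbtw a · ·` is a strict linear order on the other points, so among
the three ways of splitting four distinct points into two pairs exactly one separates. If `g`
fixes `p`, `q` and swaps `u`, `v`, invariance makes the splittings `{p, u | q, v}` and
`{p, v | q, u}` equally separating, hence both fail and `{u, v}` separates `p` from `q`. Applied
to the three pairs among the fixed points `x, y, z`, this puts three points into the two arcs cut
out by `u` and `v`, pairwise in different arcs.
-/

section CircularOrder

variable {X : Type*} [CircularOrder X] {a b c d : X}

theorem not_sbtw_swap_of_sbtw (h : sbtw a b c) : ¬ sbtw a c b :=
  fun h' => sbtw_asymm h (sbtw_cyclic_left h')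

theorem sbtw_or_sbtw_swap (hab : a ≠ b) (hac : a ≠ c) (hbc : b ≠ c) :
    sbtw a b c ∨ sbtw a c b := by
  by_contra! h
  have hcba : btw c b a := btw_iff_not_sbtw.2 h.1
  have habc : btw a b c := btw_cyclic_right (btw_iff_not_sbtw.2 h.2)
  rcases habc.antisymm hcba with h | h | h
  exacts [hab h, hbc h, hac h.symm]

theorem sbtw_drop_left (hab : sbtw a b c) (hac : sbtw a c d) : sbtw b c d :=
  sbtw_cyclic_left <| sbtw_cyclic_left <|
    sbtw_trans_right (sbtw_cyclic_left hac) (sbtw_cyclic_left (sbtw_cyclic_left hab))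

end CircularOrder

namespace SepRel

variable {X : Type*} [c : CircularOrder X] {a b d e : X}

theorem iff_sbtw :
    SepRel c a b d e ↔ (sbtw a d b ∧ sbtw a b e) ∨ (sbtw a e b ∧ sbtw a b d) := by
  rw [SepRel, @sbtw_cyclic _ _ b e a, @sbtw_cyclic _ _ b d a]

theorem symm_pairs (h : SepRel c a b d e) : SepRel c d e a b := by
  rw [iff_sbtw] at h
  rw [SepRel]
  rcases h with ⟨hadb, habe⟩ | ⟨haeb, habd⟩
  · exact .inr ⟨sbtw_drop_left hadb habe, sbtw_cyclic_right (sbtw_trans_right hadb habe)⟩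
  · exact .inl ⟨sbtw_cyclic_right (sbtw_trans_right haeb habd), sbtw_drop_left haeb habd⟩

theorem not_swap (h : SepRel c a d b e) : ¬ SepRel c a e b d := by
  rw [iff_sbtw] at h ⊢
  rintro (⟨habe, haed⟩ | ⟨hade, haeb⟩) <;> rcases h with ⟨habd, hade'⟩ | ⟨haed', hadb⟩
  · exact not_sbtw_swap_of_sbtw hade' haed
  · exact not_sbtw_swap_of_sbtw (sbtw_trans_right habe haed) hadb
  · exact not_sbtw_swap_of_sbtw (sbtw_trans_right habd hade) haeb
  · exact not_sbtw_swap_of_sbtw hade haed'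

theorem trichotomy (hab : a ≠ b) (had : a ≠ d) (hae : a ≠ e) (hbd : b ≠ d) (hbe : b ≠ e)
    (hde : d ≠ e) : SepRel c a b d e ∨ SepRel c a d b e ∨ SepRel c a e b d := by
  simp only [iff_sbtw]
  rcases sbtw_or_sbtw_swap hab had hbd with hbd' | hdb' <;>
    rcases sbtw_or_sbtw_swap hab hae hbe with hbe' | heb' <;>
    rcases sbtw_or_sbtw_swap had hae hde with hde' | hed'
  · exact .inr (.inl (.inl ⟨hbd', hde'⟩))
  · exact .inr (.inr (.inl ⟨hbe', hed'⟩))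
  · exact absurd (sbtw_trans_right hbd' hde') (not_sbtw_swap_of_sbtw heb')
  · exact .inl (.inr ⟨heb', hbd'⟩)
  · exact .inl (.inl ⟨hdb', hbe'⟩)
  · exact absurd (sbtw_trans_right hbe' hed') (not_sbtw_swap_of_sbtw hdb')
  · exact .inr (.inr (.inr ⟨hde', heb'⟩))
  · exact .inr (.inl (.inr ⟨hed', hdb'⟩))

theorem of_iff_swap (hab : a ≠ b) (had : a ≠ d) (hae : a ≠ e) (hbd : b ≠ d) (hbe : b ≠ e)
    (hde : d ≠ e) (h : SepRel c a d b e ↔ SepRel c a e b d) : SepRel c a b d e := by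
  rcases trichotomy hab had hae hbd hbe hde with h₁ | h₂ | h₃
  · exact h₁
  · exact absurd (h.1 h₂) (not_swap h₂)
  · exact absurd h₃ (not_swap (h.2 h₃))

theorem not_sepRel_of_sepRel {f : X} (hde : SepRel c a b d e) (hdf : SepRel c a b d f) :
    ¬ SepRel c a b e f := by
  rw [iff_sbtw] at *
  have one_side (p : X) : ¬ (sbtw a p b ∧ sbtw a b p) := fun h => not_sbtw_swap_of_sbtw h.1 h.2
  have := one_side d
  have := one_side e
  have := one_side f
  tauto

theorem of_map_fixed_swapped {σ : X → X}
    (hσ : ∀ a b d e, SepRel c a b d e ↔ SepRel c (σ a) (σ b) (σ d) (σ e))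
    (hab : a ≠ b) (had : a ≠ d) (hae : a ≠ e) (hbd : b ≠ d) (hbe : b ≠ e) (hde : d ≠ e)
    (ha : σ a = a) (hb : σ b = b) (hd : σ d = e) (he : σ e = d) : SepRel c d e a b :=
  symm_pairs <| of_iff_swap hab had hae hbd hbe hde <| by
    simpa only [ha, hb, hd, he] using hσ a d b e

end SepRel

theorem stmt9 {X : Type*} (G : Subgroup (Equiv.Perm X)) (g : Equiv.Perm X) (hg : g ∈ G)
    (x y z u v : X) (hdist : List.Pairwise (· ≠ ·) [x, y, z, u, v])
    (hx : g x = x) (hy : g y = y) (hz : g z = z) (hu : g u = v) (hv : g v = u) :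
    ¬ ∃ c : CircularOrder X, ∀ h ∈ G, ∀ a b d e : X,
      SepRel c a b d e ↔ SepRel c (h a) (h b) (h d) (h e) := by
  rintro ⟨c, hc⟩
  obtain ⟨⟨hxy, hxz, hxu, hxv⟩, ⟨hyz, hyu, hyv⟩, ⟨hzu, hzv⟩, huv⟩ := by simpa using hdist
  have hgc := hc g hg
  exact SepRel.not_sepRel_of_sepRel
    (SepRel.of_map_fixed_swapped hgc hxy hxu hxv hyu hyv huv hx hy hu hv)
    (SepRel.of_map_fixed_swapped hgc hxz hxu hxv hzu hzv huv hx hz hu hv)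
    (SepRel.of_map_fixed_swapped hgc hyz hyu hyv hzu hzv huv hy hz hu hv)
end

section
/- Let G be a transitive permutation group on a set Y, let E be a G-invariant equivalence relation on Y such that the induced action of G on Y/E is 2-transitive, and suppose that for any two E-equivalent x, x' ∈ Y and any y in a different E-class there exists g ∈ G with x^g = x' and y^g = y. If E* is any G-congruence on Y not contained in E, then E* is the universal relation. Consequently E is the unique maximal proper G-congruence on Y (provided E is proper and non-trivial). -/
/-! A congruence `E'` not contained in `E` relates some pair lying in distinct `E`-classes.
Two-transitivity on `Y/E` moves that pair into any two prescribed distinct classes, and the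
homogeneity condition then moves each point inside its class while fixing the other, so `E'`
relates every pair in distinct classes. Two points of one class are both `E'`-related to a
point outside it, so `E'` is universal. -/

section Congruence

variable {Y : Type*} {G : Subgroup (Equiv.Perm Y)} {E E' : Y → Y → Prop}

lemma exists_not_rel_of_exists_not_rel (hE : Equivalence E) (hproper : ∃ u v, ¬ E u v) (x : Y) :
    ∃ z, ¬ E x z := by
  obtain ⟨u, v, huv⟩ := hproper
  by_cases hxu : E x u
  · exact ⟨v, fun hxv => huv (hE.trans (hE.symm hxu) hxv)⟩
  · exact ⟨u, hxu⟩

lemma rel_congr_left_of_homogeneous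
    (hhom : ∀ x x' y : Y, E x x' → ¬ E x y → ∃ g ∈ G, g x = x' ∧ g y = y)
    (hE'inv : ∀ g ∈ G, ∀ x y, E' x y → E' (g x) (g y))
    {p p' q : Y} (h : E' p q) (hpp' : E p p') (hpq : ¬ E p q) :
    E' p' q := by
  obtain ⟨g, hg, hgp, hgq⟩ := hhom p p' q hpp' hpq
  simpa only [hgp, hgq] using hE'inv g hg p q h

lemma rel_congr_right_of_homogeneous
    (hhom : ∀ x x' y : Y, E x x' → ¬ E x y → ∃ g ∈ G, g x = x' ∧ g y = y)
    (hE'inv : ∀ g ∈ G, ∀ x y, E' x y → E' (g x) (g y))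
    {p q q' : Y} (h : E' p q) (hqq' : E q q') (hqp : ¬ E q p) :
    E' p q' := by
  obtain ⟨g, hg, hgq, hgp⟩ := hhom q q' p hqq' hqp
  simpa only [hgp, hgq] using hE'inv g hg p q h

lemma rel_of_not_rel_of_twoTransitive
    (hhom : ∀ x x' y : Y, E x x' → ¬ E x y → ∃ g ∈ G, g x = x' ∧ g y = y)
    (hE'inv : ∀ g ∈ G, ∀ x y, E' x y → E' (g x) (g y)) (hE : Equivalence E)
    (h2 : ∀ x y x' y' : Y, ¬ E x y → ¬ E x' y' → ∃ g ∈ G, E (g x) x' ∧ E (g y) y')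
    {a b : Y} (hab' : E' a b) (hab : ¬ E a b) {x y : Y} (hxy : ¬ E x y) : E' x y := by
  obtain ⟨g, hg, hgax, hgby⟩ := h2 a b x y hab hxy
  have hgab : ¬ E (g a) (g b) := fun h =>
    hxy (hE.trans (hE.symm hgax) (hE.trans h hgby))
  have hxgb : E' x (g b) :=
    rel_congr_left_of_homogeneous hhom hE'inv (hE'inv g hg a b hab') hgax hgab
  have hgbx : ¬ E (g b) x := fun h => hgab (hE.trans hgax (hE.symm h))
  exact rel_congr_right_of_homogeneous hhom hE'inv hxgb hgby hgbx

lemma forall_rel_of_not_le (hE : Equivalence E) (hproper : ∃ u v, ¬ E u v)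
    (h2 : ∀ x y x' y' : Y, ¬ E x y → ¬ E x' y' → ∃ g ∈ G, E (g x) x' ∧ E (g y) y')
    (hhom : ∀ x x' y : Y, E x x' → ¬ E x y → ∃ g ∈ G, g x = x' ∧ g y = y)
    (hE' : Equivalence E') (hE'inv : ∀ g ∈ G, ∀ x y, E' x y → E' (g x) (g y))
    (hle : ¬ ∀ x y, E' x y → E x y) (x y : Y) : E' x y := by
  simp only [not_forall, exists_prop] at hle
  obtain ⟨a, b, hab', hab⟩ := hle
  have across {x y : Y} (hxy : ¬ E x y) : E' x y :=
    rel_of_not_rel_of_twoTransitive hhom hE'inv hE h2 hab' hab hxy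
  by_cases hxy : E x y
  · obtain ⟨z, hxz⟩ := exists_not_rel_of_exists_not_rel hE hproper x
    have hyz : ¬ E y z := fun h => hxz (hE.trans hxy h)
    exact hE'.trans (across hxz) (hE'.symm (across hyz))
  · exact across hxy

end Congruence

theorem stmt14_general {Y : Type*} (G : Subgroup (Equiv.Perm Y))
    (E : Y → Y → Prop) (hE : Equivalence E)
    -- E is proper and non-trivial
    (hproper : ∃ x y, ¬ E x y)
    -- the induced action on Y/E is 2-transitive
    (h2 : ∀ x y x' y' : Y, ¬ E x y → ¬ E x' y' → ∃ g ∈ G, E (g x) x' ∧ E (g y) y')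
    -- for E-equivalent x, x' and y in a different class, some g moves x to x' fixing y
    (hhom : ∀ x x' y : Y, E x x' → ¬ E x y → ∃ g ∈ G, g x = x' ∧ g y = y) :
    -- any G-congruence not contained in E is universal
    (∀ E' : Y → Y → Prop, Equivalence E' → (∀ g ∈ G, ∀ x y, E' x y → E' (g x) (g y)) →
      ¬ (∀ x y, E' x y → E x y) → ∀ x y, E' x y) ∧
    -- hence E is the unique maximal proper G-congruence: every proper one lies in E
    (∀ E' : Y → Y → Prop, Equivalence E' → (∀ g ∈ G, ∀ x y, E' x y → E' (g x) (g y)) →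
      ¬ (∀ x y, E' x y) → ∀ x y, E' x y → E x y) := by
  have universal := fun E' => @forall_rel_of_not_le Y G E E' hE hproper h2 hhom
  refine ⟨universal, fun E' hE' hE'inv hproper' => ?_⟩
  by_contra hle
  exact hproper' (universal E' hE' hE'inv hle)

theorem stmt14 {Y : Type*} (G : Subgroup (Equiv.Perm Y))
    (htrans : ∀ x y : Y, ∃ g ∈ G, g x = y)
    (E : Y → Y → Prop) (hE : Equivalence E)
    (hEinv : ∀ g ∈ G, ∀ x y, E x y → E (g x) (g y))
    -- E is proper and non-trivial
    (hproper : ∃ x y, ¬ E x y) (hnontriv : ∃ x y, x ≠ y ∧ E x y)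
    -- the induced action on Y/E is 2-transitive
    (h2 : ∀ x y x' y' : Y, ¬ E x y → ¬ E x' y' → ∃ g ∈ G, E (g x) x' ∧ E (g y) y')
    -- for E-equivalent x, x' and y in a different class, some g moves x to x' fixing y
    (hhom : ∀ x x' y : Y, E x x' → ¬ E x y → ∃ g ∈ G, g x = x' ∧ g y = y) :
    -- any G-congruence not contained in E is universal
    (∀ E' : Y → Y → Prop, Equivalence E' → (∀ g ∈ G, ∀ x y, E' x y → E' (g x) (g y)) →
      ¬ (∀ x y, E' x y → E x y) → ∀ x y, E' x y) ∧
    -- hence E is the unique maximal proper G-congruence: every proper one lies in E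
    (∀ E' : Y → Y → Prop, Equivalence E' → (∀ g ∈ G, ∀ x y, E' x y → E' (g x) (g y)) →
      ¬ (∀ x y, E' x y) → ∀ x y, E' x y → E x y) :=
  stmt14_general G E hE hproper h2 hhom
end

section
/- Let G be a transitive permutation group on X and suppose 𝒦 is a G-invariant family of subsets of X, each of size > 1, with no typical pair, such that any two distinct points of X lie together in some member of 𝒦, and for any distinct u, v ∈ X some member of 𝒦 contains u but not v. Define C(x;y,z) ⟺ ∃U ∈ 𝒦 (y, z ∈ U ∧ x ∉ U). Then C is a G-invariant ternary relation satisfying: C(x;y,z) → C(x;z,y), and C(x;y,z) → ¬C(y;x,z) provided additionally that for U, V ∈ 𝒦 with U ∩ V ≠ ∅ one has U ⊆ V or V ⊆ U. -/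
/-- The relation `C(x;y,z)`. -/
def CRel {X : Type*} (K : Set (Set X)) (x y z : X) : Prop :=
  ∃ U ∈ K, y ∈ U ∧ z ∈ U ∧ x ∉ U

namespace CRel

variable {X Y : Type*} {K : Set (Set X)} {x y z : X}

theorem map {L : Set (Set Y)} {f : X → Y} (hf : Function.Injective f)
    (hKL : ∀ U ∈ K, f '' U ∈ L) (h : CRel K x y z) : CRel L (f x) (f y) (f z) := by
  obtain ⟨U, hU, hy, hz, hx⟩ := h
  exact ⟨f '' U, hKL U hU, Set.mem_image_of_mem f hy, Set.mem_image_of_mem f hz,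
    (hf.mem_set_image).not.mpr hx⟩

theorem swap (h : CRel K x y z) : CRel K x z y := by
  obtain ⟨U, hU, hy, hz, hx⟩ := h
  exact ⟨U, hU, hz, hy, hx⟩

theorem not_swap (hK : ∀ U ∈ K, ∀ V ∈ K, (U ∩ V).Nonempty → U ⊆ V ∨ V ⊆ U)
    (h : CRel K x y z) : ¬ CRel K y x z := by
  rintro ⟨V, hV, hxV, hzV, hyV⟩
  obtain ⟨U, hU, hyU, hzU, hxU⟩ := h
  rcases hK U hU V hV ⟨z, hzU, hzV⟩ with hUV | hVU
  · exact hyV (hUV hyU)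
  · exact hxU (hVU hxV)

theorem perm_iff {G : Subgroup (Equiv.Perm X)} (hK : ∀ g ∈ G, ∀ U ∈ K, ⇑g '' U ∈ K)
    {g : Equiv.Perm X} (hg : g ∈ G) : CRel K (g x) (g y) (g z) ↔ CRel K x y z := by
  refine ⟨fun h => ?_, map g.injective (hK g hg)⟩
  simpa using h.map (g⁻¹).injective (hK g⁻¹ (inv_mem hg))

end CRel

theorem stmt18_general {X : Type*} (G : Subgroup (Equiv.Perm X))
    (K : Set (Set X))
    (hKinv : ∀ g ∈ G, ∀ U ∈ K, (⇑g '' U) ∈ K)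
    -- no typical pair: intersecting members are comparable under inclusion
    (hKchain : ∀ U ∈ K, ∀ V ∈ K, (U ∩ V).Nonempty → U ⊆ V ∨ V ⊆ U) :
    -- C(x;y,z) := ∃ U ∈ K, y, z ∈ U ∧ x ∉ U is G-invariant, and satisfies C1 and C2
    (∀ g ∈ G, ∀ x y z : X, (∃ U ∈ K, y ∈ U ∧ z ∈ U ∧ x ∉ U) ↔
        (∃ U ∈ K, g y ∈ U ∧ g z ∈ U ∧ g x ∉ U)) ∧
    (∀ x y z : X, (∃ U ∈ K, y ∈ U ∧ z ∈ U ∧ x ∉ U) →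
        (∃ U ∈ K, z ∈ U ∧ y ∈ U ∧ x ∉ U)) ∧
    (∀ x y z : X, (∃ U ∈ K, y ∈ U ∧ z ∈ U ∧ x ∉ U) →
        ¬ (∃ U ∈ K, x ∈ U ∧ z ∈ U ∧ y ∉ U)) :=
  ⟨fun _ hg _ _ _ => (CRel.perm_iff hKinv hg).symm, fun _ _ _ => CRel.swap,
    fun _ _ _ => CRel.not_swap hKchain⟩

theorem stmt18 {X : Type*} (G : Subgroup (Equiv.Perm X))
    (htrans : ∀ x y : X, ∃ g ∈ G, g x = y)
    (K : Set (Set X))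
    (hKinv : ∀ g ∈ G, ∀ U ∈ K, (⇑g '' U) ∈ K)
    (hKnt : ∀ U ∈ K, U.Nontrivial)
    -- no typical pair: intersecting members are comparable under inclusion
    (hKchain : ∀ U ∈ K, ∀ V ∈ K, (U ∩ V).Nonempty → U ⊆ V ∨ V ⊆ U)
    (hKpair : ∀ u v : X, u ≠ v → ∃ U ∈ K, u ∈ U ∧ v ∈ U)
    (hKsep : ∀ u v : X, u ≠ v → ∃ U ∈ K, u ∈ U ∧ v ∉ U) :
    -- C(x;y,z) := ∃ U ∈ K, y, z ∈ U ∧ x ∉ U is G-invariant, and satisfies C1 and C2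
    (∀ g ∈ G, ∀ x y z : X, (∃ U ∈ K, y ∈ U ∧ z ∈ U ∧ x ∉ U) ↔
        (∃ U ∈ K, g y ∈ U ∧ g z ∈ U ∧ g x ∉ U)) ∧
    (∀ x y z : X, (∃ U ∈ K, y ∈ U ∧ z ∈ U ∧ x ∉ U) →
        (∃ U ∈ K, z ∈ U ∧ y ∈ U ∧ x ∉ U)) ∧
    (∀ x y z : X, (∃ U ∈ K, y ∈ U ∧ z ∈ U ∧ x ∉ U) →
        ¬ (∃ U ∈ K, x ∈ U ∧ z ∈ U ∧ y ∉ U)) :=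
  stmt18_general G K hKinv hKchain
end
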